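/- Let D be a positive, 1-periodic, C² function and let r₀ > 0 be a constant. Set h(x) := ∫₀ˣ D(t)^{−1/2} dt and a := (∫₀¹ D(t)^{−1/2} dt)^{−1} (the harmonic mean of √D). For every λ ∈ ℝ, the function φ_λ(x) := D(x)^{−1/2}·exp(λ(x − a·h(x))) is a positive, 1-periodic, C² function satisfying L_{1/2}^λ[r₀;D]φ_λ = (r₀ + λ²a²)·φ_λ; hence k_{1/2}^λ[r₀;D] = r₀ + λ²a². Consequently the spreading speed for q = 1/2 is c_{1/2}*[r₀;D] = inf_{λ>0} (r₀ + λ²a²)/λ = 2√(r₀)·a. -/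

import Mathlib

/-!
For `q = 1/2` and `D = s²` with `s > 0`, the operator factorises (Stratonovich form):
`L_{1/2}^λ[r;D] (v / s) = (T² v + r v) / s`, where `T v = s (v' − λ v)` is `twistedDeriv s λ v`.
With `h' = 1/s`, the function `v = exp(λ(x − a h))` satisfies `v' − λ v = −λ a v / s`,
i.e. `T v = −λ a v`, so `T² v = λ² a² v` and `φ_λ = v / s` is an eigenfunction with eigenvalue
`r₀ + λ² a²`. It is periodic because `h(x + 1) = h(x) + 1/a`. The speed is then the AM–GM bound
`(r₀ + λ² a²)/λ ≥ 2 √r₀ a`, attained at `λ = √r₀ / a`.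
-/

open Real MeasureTheory Set Filter Topology

noncomputable section

/-- The operator `L_q^λ[r;D]` acting on C² functions `ψ`:
`(L_q^λ[r;D]ψ)(x) = D ψ'' + ((1+q)D' − 2λD) ψ' + (qD'' + λ²D − (1+q)λD' + r) ψ`. -/
def Lop (q lam : ℝ) (r D ψ : ℝ → ℝ) (x : ℝ) : ℝ :=
  D x * deriv (deriv ψ) x + ((1 + q) * deriv D x - 2 * lam * D x) * deriv ψ x +
    (q * deriv (deriv D) x + lam ^ 2 * D x - (1 + q) * lam * deriv D x + r x) * ψ x

/-- `(k, ψ)` is a principal eigenpair of `L_q^λ[r;D]`: `ψ` is a positive, 1-periodic,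
C² function with `L_q^λ[r;D]ψ = kψ`. -/
def IsEigenpair (q lam : ℝ) (r D : ℝ → ℝ) (k : ℝ) (ψ : ℝ → ℝ) : Prop :=
  ContDiff ℝ 2 ψ ∧ (∀ x, 0 < ψ x) ∧ Function.Periodic ψ 1 ∧
    ∀ x, Lop q lam r D ψ x = k * ψ x

/-- The Freidlin–Gärtner infimum `inf_{λ>0} k(λ)/λ`, as an extended real number. -/
def speed (k : ℝ → ℝ) : EReal := ⨅ l : {l : ℝ // 0 < l}, ((k l.1 / l.1 : ℝ) : EReal)

lemma ContDiff.hasDerivAt_deriv_deriv {f : ℝ → ℝ} (hf : ContDiff ℝ 2 f) (x : ℝ) :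
    HasDerivAt (deriv f) (deriv (deriv f) x) x :=
  ((hf.deriv' (n := 1)).differentiable one_ne_zero x).hasDerivAt

lemma contDiff_succ_of_hasDerivAt {f g : ℝ → ℝ} {n : ℕ} (hf : ∀ x, HasDerivAt f (g x) x)
    (hg : ContDiff ℝ n g) : ContDiff ℝ (n + 1) f := by
  rw [contDiff_succ_iff_deriv]
  refine ⟨fun x => (hf x).differentiableAt, by simp, ?_⟩
  rwa [funext fun x => (hf x).deriv]

def twistedDeriv (s : ℝ → ℝ) (lam : ℝ) (v : ℝ → ℝ) (x : ℝ) : ℝ :=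
  s x * (deriv v x - lam * v x)

lemma twistedDeriv_const_mul (s : ℝ → ℝ) (lam c : ℝ) (v : ℝ → ℝ) :
    twistedDeriv s lam (fun y => c * v y) = fun y => c * twistedDeriv s lam v y := by
  funext y
  simp only [twistedDeriv, deriv_const_mul_field']
  ring

lemma Lop_half_sq_inv_mul {s v : ℝ → ℝ} (hs : ContDiff ℝ 2 s) (hs0 : ∀ x, s x ≠ 0)
    (hv : ContDiff ℝ 2 v) (lam : ℝ) (r : ℝ → ℝ) (x : ℝ) :
    Lop (1 / 2) lam r (fun y => s y ^ 2) (fun y => (s y)⁻¹ * v y) x =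
      (s x)⁻¹ * (twistedDeriv s lam (twistedDeriv s lam v) x + r x * v x) := by
  have hs1 y : HasDerivAt s (deriv s y) y := (hs.differentiable two_ne_zero y).hasDerivAt
  have hv1 y : HasDerivAt v (deriv v y) y := (hv.differentiable two_ne_zero y).hasDerivAt
  have hs2 := hs.hasDerivAt_deriv_deriv x
  have hv2 := hv.hasDerivAt_deriv_deriv x
  have hD1 : deriv (fun y => s y ^ 2) = fun y => 2 * s y * deriv s y :=
    funext fun y => (((hs1 y).pow 2 : HasDerivAt (fun y => s y ^ 2) _ y)).deriv.trans (by ring)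
  have hψ1 : deriv (fun y => (s y)⁻¹ * v y) =
      fun y => -deriv s y / s y ^ 2 * v y + (s y)⁻¹ * deriv v y :=
    funext fun y => (((hs1 y).inv (hs0 y)).mul (hv1 y)).deriv
  have hT : deriv (twistedDeriv s lam v) x =
      deriv s x * (deriv v x - lam * v x) + s x * (deriv (deriv v) x - lam * deriv v x) :=
    ((hs1 x).mul (hv2.sub ((hv1 x).const_mul lam))).deriv
  have hψ2 : HasDerivAt (fun y => -deriv s y / s y ^ 2 * v y + (s y)⁻¹ * deriv v y) _ x :=
    ((hs2.neg.div ((hs1 x).pow 2) (pow_ne_zero 2 (hs0 x))).mul (hv1 x)).add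
      (((hs1 x).inv (hs0 x)).mul hv2)
  have hD2 : HasDerivAt (fun y => 2 * s y * deriv s y) _ x := ((hs1 x).const_mul 2).mul hs2
  rw [Lop, hψ1, hD1, hψ2.deriv, hD2.deriv, twistedDeriv, hT, twistedDeriv]
  simp only [Pi.neg_apply, Pi.div_apply, Pi.pow_apply, Pi.inv_apply]
  field_simp [hs0 x]
  ring

section Eigenfunction

variable {s h : ℝ → ℝ} (hs0 : ∀ y, s y ≠ 0) (hh : ∀ y, HasDerivAt h (1 / s y) y)

include hs0 hh

lemma contDiff_exp_mul_sub (hs : ContDiff ℝ 2 s) (lam a : ℝ) :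
    ContDiff ℝ 2 fun y => exp (lam * (y - a * h y)) := by
  have h2 : ContDiff ℝ 2 h :=
    contDiff_succ_of_hasDerivAt (n := 1) hh (contDiff_const.div (hs.of_le one_le_two) hs0)
  exact contDiff_exp.comp (contDiff_const.mul (contDiff_id.sub (contDiff_const.mul h2)))

lemma twistedDeriv_exp (lam a : ℝ) :
    twistedDeriv s lam (fun y => exp (lam * (y - a * h y))) =
      fun y => -(lam * a) * exp (lam * (y - a * h y)) := by
  funext y
  have hv : HasDerivAt (fun y => exp (lam * (y - a * h y))) _ y :=
    (((hasDerivAt_id y).sub ((hh y).const_mul a)).const_mul lam).exp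
  rw [twistedDeriv, hv.deriv]
  simp only [Pi.sub_apply, id]
  field_simp [hs0 y]
  ring

lemma Lop_half_inv_mul_exp (hs : ContDiff ℝ 2 s) (lam a r₀ x : ℝ) :
    Lop (1 / 2) lam (fun _ => r₀) (fun y => s y ^ 2)
        (fun y => (s y)⁻¹ * exp (lam * (y - a * h y))) x =
      (r₀ + lam ^ 2 * a ^ 2) * ((s x)⁻¹ * exp (lam * (x - a * h x))) := by
  rw [Lop_half_sq_inv_mul hs hs0 (contDiff_exp_mul_sub hs0 hh hs lam a), twistedDeriv_exp hs0 hh,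
    twistedDeriv_const_mul, twistedDeriv_exp hs0 hh]
  ring

end Eigenfunction

lemma periodic_inv_mul_exp_primitive {s w : ℝ → ℝ} (hs : Function.Periodic s 1)
    (hw : Function.Periodic w 1) (hwc : Continuous w) (hw1 : ∫ t in (0 : ℝ)..1, w t ≠ 0)
    (lam : ℝ) :
    Function.Periodic (fun x => (s x)⁻¹ *
      exp (lam * (x - (∫ t in (0 : ℝ)..1, w t)⁻¹ * ∫ t in (0 : ℝ)..x, w t))) 1 := by
  intro x
  have hprim := hw.intervalIntegral_add_eq_add 0 x fun _ _ => hwc.intervalIntegrable _ _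
  rw [zero_add] at hprim
  simp only [hs x, hprim, mul_add, inv_mul_cancel₀ hw1]
  ring_nf

lemma speed_const_add_sq_mul {r a : ℝ} (hr : 0 < r) (ha : 0 < a) :
    speed (fun l => r + l ^ 2 * a ^ 2) = ((2 * √r * a : ℝ) : EReal) := by
  have hsq : √r ^ 2 = r := sq_sqrt hr.le
  apply le_antisymm
  · refine iInf_le_of_le ⟨√r / a, div_pos (sqrt_pos.2 hr) ha⟩ (le_of_eq ?_)
    norm_cast
    field_simp
    rw [hsq]
    ring
  · refine le_iInf fun l => ?_
    rw [EReal.coe_le_coe_iff, le_div_iff₀ l.2]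
    nlinarith [sq_nonneg (l.1 * a - √r)]

theorem stmt_8 (D : ℝ → ℝ) (hD : ContDiff ℝ 2 D) (hDpos : ∀ x, 0 < D x)
    (hDper : Function.Periodic D 1) (r₀ : ℝ) (hr₀ : 0 < r₀) :
    (∀ lam : ℝ, IsEigenpair (1 / 2) lam (fun _ => r₀) D
        (r₀ + lam ^ 2 * ((∫ t in (0:ℝ)..1, 1 / Real.sqrt (D t))⁻¹) ^ 2)
        (fun x => (Real.sqrt (D x))⁻¹ *
          Real.exp (lam * (x - (∫ t in (0:ℝ)..1, 1 / Real.sqrt (D t))⁻¹ *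
            ∫ t in (0:ℝ)..x, 1 / Real.sqrt (D t))))) ∧
      speed (fun lam => r₀ + lam ^ 2 * ((∫ t in (0:ℝ)..1, 1 / Real.sqrt (D t))⁻¹) ^ 2) =
        ((2 * Real.sqrt r₀ * (∫ t in (0:ℝ)..1, 1 / Real.sqrt (D t))⁻¹ : ℝ) : EReal) := by
  have hs_pos y : 0 < √(D y) := sqrt_pos.2 (hDpos y)
  have hs0 y : √(D y) ≠ 0 := (hs_pos y).ne'
  have hs : ContDiff ℝ 2 fun y => √(D y) := hD.sqrt fun y => (hDpos y).ne'
  have hwc : Continuous fun t => 1 / √(D t) := continuous_const.div hs.continuous hs0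
  have hh y : HasDerivAt (fun x => ∫ t in (0 : ℝ)..x, 1 / √(D t)) (1 / √(D y)) y :=
    (hwc.integral_hasStrictDerivAt 0 y).hasDerivAt
  have hmean : 0 < ∫ t in (0 : ℝ)..1, 1 / √(D t) :=
    intervalIntegral.intervalIntegral_pos_of_pos (hwc.intervalIntegrable 0 1)
      (fun t => one_div_pos.2 (hs_pos t)) one_pos
  have hDs : (fun y => √(D y) ^ 2) = D := funext fun y => sq_sqrt (hDpos y).le
  refine ⟨fun lam => ⟨?_, fun x => mul_pos (inv_pos.2 (hs_pos x)) (exp_pos _), ?_, fun x => ?_⟩,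
    speed_const_add_sq_mul hr₀ (inv_pos.2 hmean)⟩
  · exact (hs.inv hs0).mul (contDiff_exp_mul_sub hs0 hh hs lam _)
  · exact periodic_inv_mul_exp_primitive (hDper.comp sqrt) (hDper.comp fun d => 1 / √d) hwc
      hmean.ne' lam
  · have hLop := Lop_half_inv_mul_exp hs0 hh hs lam (∫ t in (0 : ℝ)..1, 1 / √(D t))⁻¹ r₀ x
    rwa [hDs] at hLop
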